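/- arXiv:2501.11753 — 2 statements merged into one kernel-verified Lean document; each statement's English description precedes it below -/
import Mathlib

section
/- Let m be a meeting function with f the inverse of t ↦ 1/m'(t), let k > 0, let P be a Borel probability measure on the space of Borel probability measures on [0,1] with P({ν : E_ν[θ] = 0}) = 0, and let η ∈ (0, β) be the unique value with k ∫ f(E_ν[θ]/η) · 1[β·E_ν[θ] > η] dP(ν) = 1. Then the function τ^FB(ν) := f(E_ν[θ]/η) · 1[β·E_ν[θ] > η] maximizes k ∫ m(τ(ν)) E_ν[θ] dP(ν) over all nonnegative P-integrable functions τ satisfying k ∫ τ dP = 1, and any other maximizer equals τ^FB P-almost everywhere. -/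
open MeasureTheory Set Filter Topology ProbabilityTheory

noncomputable section

/-- The type space `Θ = [0,1]` of seller types. -/
abbrev Θ : Type := Set.Icc (0:ℝ) 1

/-- The space of Borel probability measures on `[0,1]`, with the weak topology. -/
abbrev PM : Type := MeasureTheory.ProbabilityMeasure Θ

/-- Borel σ-algebra on the space of probability measures on `[0,1]`. -/
instance : MeasurableSpace PM := borel PM

/-- Expected seller type of a submarket `ν`: `E_ν[θ]`. -/
def Eθ (ν : PM) : ℝ := ∫ θ, (θ : ℝ) ∂(ν : Measure Θ)

/-- A meeting function: `m 0 = 0`, `m t ≤ min 1 t`, twice differentiable, strictly increasing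
and strictly concave, with `β = lim_{t→0+} m t / t ∈ (0,1]` and `α = lim_{t→∞} m t ∈ (0,1]`. -/
structure MeetingFunction where
  m : ℝ → ℝ
  β : ℝ
  α : ℝ
  m_zero : m 0 = 0
  m_le : ∀ t ≥ (0:ℝ), m t ≤ min 1 t
  diff1 : ∀ t > (0:ℝ), DifferentiableAt ℝ m t
  diff2 : ∀ t > (0:ℝ), DifferentiableAt ℝ (deriv m) t
  mono : StrictMonoOn m (Ici 0)
  concave : StrictConcaveOn ℝ (Ici 0) m
  β_mem : β ∈ Ioc (0:ℝ) 1
  α_mem : α ∈ Ioc (0:ℝ) 1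
  β_lim : Tendsto (fun t => m t / t) (nhdsWithin 0 (Ioi 0)) (nhds β)
  α_lim : Tendsto m atTop (nhds α)

/-- The first-best tightness function `τ^FB(ν) = f(E_ν[θ]/η) · 1[β E_ν[θ] > η]`. -/
def tauFB (M : MeetingFunction) (f : ℝ → ℝ) (η : ℝ) (ν : PM) : ℝ :=
  if M.β * Eθ ν > η then f (Eθ ν / η) else 0

/-! ### Auxiliary lemmas -/

instance PM.borelSpace : BorelSpace PM := ⟨rfl⟩

lemma Eθ_nonneg (ν : PM) : 0 ≤ Eθ ν := integral_nonneg fun θ => θ.2.1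

lemma Eθ_integrable (ν : PM) :
    Integrable (fun θ : Θ => (θ : ℝ)) (ν : Measure Θ) := by
  exact (BoundedContinuousFunction.mkOfCompact
    ⟨fun θ : Θ => (θ:ℝ), continuous_subtype_val⟩).integrable (ν : Measure Θ)

lemma Eθ_le_one (ν : PM) : Eθ ν ≤ 1 := by
  calc ∫ θ, (θ:ℝ) ∂(ν : Measure Θ) ≤ ∫ _, (1:ℝ) ∂(ν : Measure Θ) :=
        integral_mono (Eθ_integrable ν) (integrable_const 1) fun θ => θ.2.2
    _ = 1 := by simp

lemma Eθ_continuous : Continuous Eθ := by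
  have := ProbabilityMeasure.continuous_integral_boundedContinuousFunction (X := Θ)
    (BoundedContinuousFunction.mkOfCompact ⟨fun θ : Θ => (θ:ℝ), continuous_subtype_val⟩)
  exact this

namespace MeetingFunction

variable (M : MeetingFunction)

lemma m_nonneg : ∀ t ≥ (0:ℝ), 0 ≤ M.m t := fun t ht =>
  M.m_zero ▸ M.mono.monotoneOn self_mem_Ici ht ht

lemma m_le_one : ∀ t ≥ (0:ℝ), M.m t ≤ 1 := fun t ht =>
  (M.m_le t ht).trans (min_le_left _ _)

lemma deriv_pos : ∀ t > (0:ℝ), 0 < deriv M.m t := by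
  intro t ht
  have h := M.concave.slope_lt_deriv (x := t) (y := t + 1) (mem_Ici.mpr ht.le)
    (mem_Ici.mpr (by linarith)) (by linarith) (M.diff1 t ht)
  have hmono : M.m t < M.m (t + 1) :=
    M.mono (mem_Ici.mpr ht.le) (mem_Ici.mpr (by linarith)) (by linarith)
  rw [slope_def_field] at h
  have : 0 < (M.m (t + 1) - M.m t) / (t + 1 - t) := div_pos (by linarith) (by linarith)
  linarith

lemma slope_anti : ∀ s t : ℝ, 0 < s → s < t → M.m t / t < M.m s / s := by
  intro s t hs hst
  have := M.concave.secant_strict_mono (a := 0) (x := s) (y := t) self_mem_Ici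
    hs.le (hs.trans hst).le (ne_of_gt hs) (ne_of_gt (hs.trans hst)) hst
  simpa [M.m_zero] using this

lemma slope_le_β : ∀ t > (0:ℝ), M.m t / t ≤ M.β := by
  intro t ht
  refine ge_of_tendsto M.β_lim ?_
  filter_upwards [Ioo_mem_nhdsGT_of_mem (show (0:ℝ) ∈ Ico 0 t from ⟨le_refl 0, ht⟩)] with s hs
  exact (M.slope_anti s t hs.1 hs.2).le

lemma m_lt_β_mul : ∀ t > (0:ℝ), M.m t < M.β * t := by
  intro t ht
  have h1 : M.m t / t < M.m (t/2) / (t/2) := M.slope_anti (t/2) t (by linarith) (by linarith)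
  have h2 := M.slope_le_β (t/2) (by linarith)
  have h3 : M.m t / t < M.β := lt_of_lt_of_le h1 h2
  have := (div_lt_iff₀ ht).mp h3
  linarith

lemma m_le_β_mul : ∀ t ≥ (0:ℝ), M.m t ≤ M.β * t := by
  intro t ht
  rcases eq_or_lt_of_le ht with rfl | ht
  · simp [M.m_zero]
  · exact (M.m_lt_β_mul t ht).le

lemma deriv_le_β : ∀ t > (0:ℝ), deriv M.m t ≤ M.β := by
  intro t ht
  have h := M.concave.deriv_lt_slope (x := 0) (y := t) self_mem_Ici ht.le ht (M.diff1 t ht)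
  rw [slope_def_field, M.m_zero] at h
  have h2 := M.slope_le_β t ht
  have : (M.m t - 0) / (t - 0) = M.m t / t := by ring_nf
  linarith [this ▸ h]

lemma tangent_lt : ∀ t > (0:ℝ), ∀ x ≥ (0:ℝ), x ≠ t →
    M.m x < M.m t + deriv M.m t * (x - t) := by
  intro t ht x hx hne
  rcases lt_or_gt_of_ne hne with h | h
  · have hs := M.concave.deriv_lt_slope (x := x) (y := t) hx ht.le h (M.diff1 t ht)
    rw [slope_def_field] at hs
    have htx : 0 < t - x := by linarith
    have := (lt_div_iff₀ htx).mp hs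
    nlinarith
  · have hs := M.concave.slope_lt_deriv (x := t) (y := x) ht.le (le_trans ht.le h.le) h
      (M.diff1 t ht)
    rw [slope_def_field] at hs
    have hxt : 0 < x - t := by linarith
    have := (div_lt_iff₀ hxt).mp hs
    nlinarith

lemma m_continuousOn : ContinuousOn M.m (Ici 0) := by
  intro x hx
  rcases eq_or_lt_of_le (mem_Ici.mp hx) with rfl | hxpos
  · have h1 : Tendsto M.m (𝓝[Ici (0:ℝ)] 0) (𝓝 0) := by
      apply squeeze_zero'
        (Filter.eventually_of_mem self_mem_nhdsWithin fun t ht => M.m_nonneg t ht)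
        (Filter.eventually_of_mem self_mem_nhdsWithin fun t ht =>
          (M.m_le t ht).trans (min_le_right _ _))
        (tendsto_id.mono_left nhdsWithin_le_nhds)
    simpa [ContinuousWithinAt, M.m_zero] using h1
  · exact ((M.diff1 x hxpos).continuousAt).continuousWithinAt

end MeetingFunction

/-- The tightness function `τ^FB` maximizes total surplus
`k ∫ m(τ(ν)) E_ν[θ] dP` over all nonnegative `P`-integrable `τ` with `k ∫ τ dP = 1`, and
any other maximizer equals `τ^FB` `P`-almost everywhere. -/
theorem stmt2 (M : MeetingFunction) (f : ℝ → ℝ)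
    (hf0 : f (1 / M.β) = 0)
    (hfmono : StrictMonoOn f (Ici (1 / M.β)))
    (hfcont : ContinuousOn f (Ici (1 / M.β)))
    (hftop : Tendsto f atTop atTop)
    (hfinv : ∀ t > (0:ℝ), f (1 / deriv M.m t) = t)
    (k : ℝ) (hk : 0 < k)
    (P : Measure PM) [IsProbabilityMeasure P]
    (hP0 : P {ν | Eθ ν = 0} = 0)
    (η : ℝ) (hη : η ∈ Ioo 0 M.β)
    (hfeas : k * ∫ ν, tauFB M f η ν ∂P = 1) :
    Integrable (tauFB M f η) P ∧
    (∀ τ : PM → ℝ, (∀ ν, 0 ≤ τ ν) → Integrable τ P → k * ∫ ν, τ ν ∂P = 1 →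
        k * ∫ ν, M.m (τ ν) * Eθ ν ∂P ≤ k * ∫ ν, M.m (tauFB M f η ν) * Eθ ν ∂P) ∧
    (∀ τ : PM → ℝ, (∀ ν, 0 ≤ τ ν) → Integrable τ P → k * ∫ ν, τ ν ∂P = 1 →
        k * ∫ ν, M.m (τ ν) * Eθ ν ∂P = k * ∫ ν, M.m (tauFB M f η ν) * Eθ ν ∂P →
        τ =ᵐ[P] tauFB M f η) := by
  obtain ⟨hβ0, hβ1⟩ := M.β_mem
  obtain ⟨hη0, hηβ⟩ := hη
  set T := tauFB M f η with hTdef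
  -- T as a continuous function
  have hTeq : T = (fun e => f (max (e / η) (1 / M.β))) ∘ Eθ := by
    funext ν
    simp only [hTdef, tauFB, Function.comp]
    rcases lt_or_ge η (M.β * Eθ ν) with h | h
    · rw [if_pos h, max_eq_left]
      rw [div_le_div_iff₀ hβ0 hη0]
      nlinarith
    · rw [if_neg (not_lt.mpr h), max_eq_right, hf0]
      rw [div_le_div_iff₀ hη0 hβ0]
      nlinarith
  have hTcont : Continuous T := by
    rw [hTeq]
    exact (hfcont.comp_continuous ((continuous_id.div_const η).max continuous_const)
      (fun x => mem_Ici.mpr (le_max_right _ _))).comp Eθ_continuous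
  have hTnn : ∀ ν, 0 ≤ T ν := by
    intro ν
    simp only [hTdef, tauFB]
    split
    · next h =>
      have h1 : 1 / M.β < Eθ ν / η := by
        rw [div_lt_div_iff₀ hβ0 hη0]; nlinarith
      have := hfmono self_mem_Ici (mem_Ici.mpr h1.le) h1
      linarith [hf0]
    · exact le_refl 0
  -- Lagrange condition on the active region
  have hLagr : ∀ ν : PM, M.β * Eθ ν > η → 0 < T ν ∧ deriv M.m (T ν) * Eθ ν = η := by
    intro ν hcase
    have hEpos : 0 < Eθ ν := by nlinarith [Eθ_nonneg ν]
    have h1 : 1 / M.β < Eθ ν / η := by rw [div_lt_div_iff₀ hβ0 hη0]; nlinarith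
    have hTν : T ν = f (Eθ ν / η) := by simp only [hTdef, tauFB, if_pos hcase]
    have hTpos : 0 < T ν := by
      rw [hTν, ← hf0]
      exact hfmono self_mem_Ici (mem_Ici.mpr h1.le) h1
    refine ⟨hTpos, ?_⟩
    have hd := M.deriv_pos (T ν) hTpos
    have hinv := hfinv (T ν) hTpos
    have hmem : 1 / deriv M.m (T ν) ∈ Ici (1 / M.β) :=
      mem_Ici.mpr (one_div_le_one_div_of_le hd (M.deriv_le_β (T ν) hTpos))
    have heqf : f (1 / deriv M.m (T ν)) = f (Eθ ν / η) := by rw [hinv, hTν]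
    have heq := hfmono.injOn hmem (mem_Ici.mpr h1.le) heqf
    field_simp at heq
    -- heq : η = deriv M.m (T ν) * Eθ ν  (or some arrangement)
    nlinarith [heq]
  -- pointwise concavity inequality
  have hkey : ∀ ν : PM, ∀ x : ℝ, 0 ≤ x →
      M.m x * Eθ ν ≤ M.m (T ν) * Eθ ν + η * (x - T ν) := by
    intro ν x hx
    rcases lt_or_ge η (M.β * Eθ ν) with hcase | hcase
    · obtain ⟨hTpos, hLag⟩ := hLagr ν hcase
      have hEpos : 0 < Eθ ν := by nlinarith [Eθ_nonneg ν]
      rcases eq_or_ne x (T ν) with rfl | hne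
      · simp
      · have ht := M.tangent_lt (T ν) hTpos x hx hne
        nlinarith
    · have hT0 : T ν = 0 := by simp only [hTdef, tauFB, if_neg (not_lt.mpr hcase)]
      rw [hT0, M.m_zero]
      have h1 := M.m_le_β_mul x hx
      have h2 := Eθ_nonneg ν
      nlinarith
  have hkeystrict : ∀ ν : PM, ∀ x : ℝ, 0 ≤ x → 0 < Eθ ν → x ≠ T ν →
      M.m x * Eθ ν < M.m (T ν) * Eθ ν + η * (x - T ν) := by
    intro ν x hx hEpos hne
    rcases lt_or_ge η (M.β * Eθ ν) with hcase | hcase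
    · obtain ⟨hTpos, hLag⟩ := hLagr ν hcase
      have ht := M.tangent_lt (T ν) hTpos x hx hne
      nlinarith
    · have hT0 : T ν = 0 := by simp only [hTdef, tauFB, if_neg (not_lt.mpr hcase)]
      rw [hT0, M.m_zero]
      have hxpos : 0 < x := lt_of_le_of_ne hx (by rw [hT0] at hne; exact Ne.symm hne)
      have h1 := M.m_lt_β_mul x hxpos
      nlinarith
  -- integrability of T
  have hTint : Integrable T P := by
    by_contra h
    rw [integral_undef h] at hfeas
    simp at hfeas
  -- integrability of surplus integrands
  have hmEint : ∀ τ : PM → ℝ, (∀ ν, 0 ≤ τ ν) → AEStronglyMeasurable τ P →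
      Integrable (fun ν => M.m (τ ν) * Eθ ν) P := by
    intro τ hτ hmeas
    have hmc : Continuous (fun x : ℝ => M.m (max x 0)) :=
      M.m_continuousOn.comp_continuous (continuous_id.max continuous_const)
        (fun x => mem_Ici.mpr (le_max_right _ _))
    have ha : AEStronglyMeasurable (fun ν => M.m (τ ν) * Eθ ν) P := by
      have h1 : (fun ν => M.m (τ ν)) = fun ν => M.m (max (τ ν) 0) := by
        funext ν; rw [max_eq_left (hτ ν)]
      rw [show (fun ν => M.m (τ ν) * Eθ ν) = fun ν => M.m (max (τ ν) 0) * Eθ ν by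
        funext ν; rw [max_eq_left (hτ ν)]]
      exact (hmc.comp_aestronglyMeasurable hmeas).mul Eθ_continuous.aestronglyMeasurable
    refine Integrable.mono' (integrable_const 1) ha (Filter.Eventually.of_forall fun ν => ?_)
    rw [Real.norm_eq_abs, abs_mul, abs_of_nonneg (M.m_nonneg _ (hτ ν)),
      abs_of_nonneg (Eθ_nonneg ν)]
    nlinarith [M.m_le_one _ (hτ ν), M.m_nonneg _ (hτ ν), Eθ_nonneg ν, Eθ_le_one ν]
  have hTval : ∫ ν, T ν ∂P = 1 / k := by
    rw [eq_div_iff hk.ne', mul_comm]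
    exact hfeas
  have hTmEint : Integrable (fun ν => M.m (T ν) * Eθ ν) P :=
    hmEint T hTnn hTcont.aestronglyMeasurable
  -- main inequality, as a reusable fact
  have hmain : ∀ τ : PM → ℝ, (∀ ν, 0 ≤ τ ν) → Integrable τ P → k * ∫ ν, τ ν ∂P = 1 →
      ∫ ν, M.m (τ ν) * Eθ ν ∂P ≤ ∫ ν, M.m (T ν) * Eθ ν ∂P := by
    intro τ hτnn hτint hτ1
    have hτval : ∫ ν, τ ν ∂P = 1 / k := by
      rw [eq_div_iff hk.ne', mul_comm]; exact hτ1
    have h1 := hmEint τ hτnn hτint.1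
    have haux : Integrable (fun ν => η * (τ ν - T ν)) P := (hτint.sub hTint).const_mul η
    have h4 : ∫ ν, M.m (τ ν) * Eθ ν ∂P ≤ ∫ ν, (M.m (T ν) * Eθ ν + η * (τ ν - T ν)) ∂P :=
      integral_mono h1 (hTmEint.add haux) (fun ν => hkey ν (τ ν) (hτnn ν))
    have h5 : ∫ ν, (M.m (T ν) * Eθ ν + η * (τ ν - T ν)) ∂P = ∫ ν, M.m (T ν) * Eθ ν ∂P := by
      rw [integral_add hTmEint haux, integral_const_mul, integral_sub hτint hTint,
        hτval, hTval]
      ring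
    exact h4.trans_eq h5
  refine ⟨hTint, fun τ hτnn hτint hτ1 =>
    mul_le_mul_of_nonneg_left (hmain τ hτnn hτint hτ1) hk.le, ?_⟩
  -- uniqueness
  intro τ hτnn hτint hτ1 hsurp
  have hτval : ∫ ν, τ ν ∂P = 1 / k := by
    rw [eq_div_iff hk.ne', mul_comm]; exact hτ1
  have h1 := hmEint τ hτnn hτint.1
  have haux : Integrable (fun ν => η * (τ ν - T ν)) P := (hτint.sub hTint).const_mul η
  set φ : PM → ℝ := fun ν => M.m (T ν) * Eθ ν + η * (τ ν - T ν) - M.m (τ ν) * Eθ ν with hφdef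
  have hφnn : ∀ ν, 0 ≤ φ ν := fun ν => sub_nonneg.mpr (hkey ν (τ ν) (hτnn ν))
  have hφint : Integrable φ P := (hTmEint.add haux).sub h1
  have hint_eq : ∫ ν, M.m (τ ν) * Eθ ν ∂P = ∫ ν, M.m (T ν) * Eθ ν ∂P :=
    mul_left_cancel₀ hk.ne' hsurp
  have hφ0 : ∫ ν, φ ν ∂P = 0 := by
    have hsub : ∫ ν, φ ν ∂P
        = (∫ ν, (M.m (T ν) * Eθ ν + η * (τ ν - T ν)) ∂P) - ∫ ν, M.m (τ ν) * Eθ ν ∂P :=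
      integral_sub (hTmEint.add haux) h1
    rw [hsub, integral_add hTmEint haux, integral_const_mul, integral_sub hτint hTint,
      hτval, hTval, hint_eq]
    ring
  have hφae : φ =ᵐ[P] 0 := (integral_eq_zero_iff_of_nonneg hφnn hφint).mp hφ0
  have hEae : ∀ᵐ ν ∂P, Eθ ν ≠ 0 := by
    rw [ae_iff]
    simpa using hP0
  filter_upwards [hφae, hEae] with ν h0 hne
  by_contra hneq
  have hEpos : 0 < Eθ ν := lt_of_le_of_ne (Eθ_nonneg ν) (Ne.symm hne)
  have hstrict := hkeystrict ν (τ ν) (hτnn ν) hEpos hneq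
  have : φ ν = 0 := h0
  simp only [hφdef] at this
  linarith
end
end

section
/- Assume λ(θ) = ℓ for all θ with ℓ ∈ (0,1]. A segmentation H ∈ MPC(F) is constrained-efficient — i.e., H maximizes k ∫ m(τ*_H(x)) x dH(x) over MPC(F) — if and only if H ∈ argmax over Ĥ ∈ MPC(F) of k ∫ τ*_H(x) dĤ(x). -/
open MeasureTheory Set Filter Topology ProbabilityTheory

noncomputable section

/-- `MPC μF`: the probability measures on `[0,1]` dominated by `μF` in the convex order,
i.e. the mean-preserving contractions of (the CDF of) `μF`. -/
def MPC (μF : Measure ℝ) : Set (Measure ℝ) :=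
  {H | IsProbabilityMeasure H ∧ H (Icc (0:ℝ) 1)ᶜ = 0 ∧
    ∀ c : ℝ → ℝ, ConvexOn ℝ (Icc 0 1) c → ContinuousOn c (Icc 0 1) →
      ∫ x, c x ∂H ≤ ∫ x, c x ∂μF}

/-- Equilibrium tightness in the submarket with posterior mean `x` at reservation value `u`:
`g(ℓx/u) · 1[βℓx > u]`. -/
def tstar (M : MeetingFunction) (g : ℝ → ℝ) (l u x : ℝ) : ℝ :=
  if M.β * l * x > u then g (l * x / u) else 0


section Aux

variable (M : MeetingFunction)

lemma MF_m_pos {t : ℝ} (ht : 0 < t) : 0 < M.m t := by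
  have := M.mono (self_mem_Ici (a := (0:ℝ))) (mem_Ici.mpr ht.le) ht
  rwa [M.m_zero] at this

lemma MF_m_le_beta {t : ℝ} (ht : 0 < t) : M.m t ≤ M.β * t := by
  have key : ∀ s ∈ Ioo (0:ℝ) t, M.m t / t ≤ M.m s / s := by
    intro s hs
    have hst : s / t < 1 := (div_lt_one ht).mpr hs.2
    have h1 : (1 - s/t) • M.m 0 + (s/t) • M.m t < M.m ((1 - s/t) • (0:ℝ) + (s/t) • t) :=
      M.concave.2 (self_mem_Ici) (mem_Ici.mpr ht.le) (ht.ne)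
        (by linarith) (div_pos hs.1 ht) (by ring)
    have hsim : (1 - s/t) • (0:ℝ) + (s/t) • t = s := by
      rw [smul_eq_mul, smul_eq_mul, mul_zero, zero_add, div_mul_cancel₀ _ ht.ne']
    rw [hsim] at h1
    simp only [smul_eq_mul, M.m_zero, mul_zero, zero_add] at h1
    rw [div_le_div_iff₀ ht hs.1]
    have h2 : s / t * M.m t * t < M.m s * t := by
      exact mul_lt_mul_of_pos_right h1 ht
    have h3 : s / t * M.m t * t = M.m t * s := by
      field_simp
    linarith
  have hev : ∀ᶠ s in 𝓝[>] (0:ℝ), M.m t / t ≤ M.m s / s := by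
    filter_upwards [Ioo_mem_nhdsGT_of_mem (show (0:ℝ) ∈ Ico (0:ℝ) t from ⟨le_rfl, ht⟩)]
      with s hs using key s hs
  have hle : M.m t / t ≤ M.β := ge_of_tendsto M.β_lim hev
  calc M.m t = M.m t / t * t := by field_simp
    _ ≤ M.β * t := mul_le_mul_of_nonneg_right hle ht.le

variable {g : ℝ → ℝ} {l : ℝ}

lemma tstar_eq (hg0 : g (1 / M.β) = 0) {u : ℝ} (hu : 0 < u) (x : ℝ) :
    tstar M g l u x = g (max (l * x / u) (1 / M.β)) := by
  have hβ := M.β_mem.1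
  unfold tstar
  split_ifs with h
  · rw [max_eq_left]
    rw [div_le_div_iff₀ hβ hu]
    nlinarith
  · rw [max_eq_right, hg0]
    rw [div_le_div_iff₀ hu hβ]
    push_neg at h
    nlinarith

lemma tstar_ind_pos (hg0 : g (1 / M.β)  = 0) (hgmono : StrictMonoOn g (Ici (1 / M.β)))
    {u x : ℝ} (hu : 0 < u) (h : M.β * l * x > u) :
    1 / M.β < l * x / u ∧ 0 < g (l * x / u) := by
  have hβ := M.β_mem.1
  have hy : 1 / M.β < l * x / u := by
    rw [div_lt_div_iff₀ hβ hu]; nlinarith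
  refine ⟨hy, ?_⟩
  have := hgmono (self_mem_Ici) (mem_Ici.mpr hy.le) hy
  rwa [hg0] at this

lemma tstar_nonneg (hg0 : g (1 / M.β) = 0) (hgmono : StrictMonoOn g (Ici (1 / M.β)))
    {u : ℝ} (hu : 0 < u) (x : ℝ) : 0 ≤ tstar M g l u x := by
  unfold tstar
  split_ifs with h
  · exact (tstar_ind_pos M hg0 hgmono hu h).2.le
  · exact le_rfl

lemma tstar_identity (hg0 : g (1 / M.β) = 0) (hgmono : StrictMonoOn g (Ici (1 / M.β)))
    (hginv : ∀ t > (0:ℝ), g (t / M.m t) = t)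
    {u : ℝ} (hu : 0 < u) (x : ℝ) :
    M.m (tstar M g l u x) * (l * x) = tstar M g l u x * u := by
  have hβ := M.β_mem.1
  unfold tstar
  split_ifs with h
  · obtain ⟨hy, ht⟩ := tstar_ind_pos M hg0 hgmono hu h
    set y := l * x / u with hy_def
    set t := g y with ht_def
    have hmt : 0 < M.m t := MF_m_pos M ht
    have hβt : M.m t ≤ M.β * t := MF_m_le_beta M ht
    have hmem : t / M.m t ∈ Ici (1 / M.β) := by
      rw [mem_Ici, div_le_div_iff₀ hβ hmt]
      nlinarith
    have hgt : g (t / M.m t) = g y := by rw [hginv t ht]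
    have heq : t / M.m t = y := hgmono.injOn hmem (mem_Ici.mpr hy.le) hgt
    have hty : t = y * M.m t := (div_eq_iff hmt.ne').mp heq
    have hlxu : l * x = y * u := by
      rw [hy_def]; field_simp
    rw [hlxu]
    nlinarith [hty]
  · simp [M.m_zero]

lemma tstar_val_nonneg (hg0 : g (1 / M.β) = 0) (hgmono : StrictMonoOn g (Ici (1 / M.β)))
    {u : ℝ} (hu : 0 < u) (x : ℝ) :
    0 ≤ M.m (tstar M g l u x) * (l * x) := by
  have hβ := M.β_mem.1
  unfold tstar
  split_ifs with h
  · obtain ⟨hy, ht⟩ := tstar_ind_pos M hg0 hgmono hu h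
    have hm : 0 ≤ M.m (g (l * x / u)) := (MF_m_pos M ht).le
    have hx : 0 < l * x := by nlinarith
    positivity
  · simp [M.m_zero]

lemma tstar_val_mono (hg0 : g (1 / M.β) = 0) (hgmono : StrictMonoOn g (Ici (1 / M.β)))
    {u₁ u₂ : ℝ} (hu1 : 0 < u₁) (hle : u₁ ≤ u₂) (x : ℝ) :
    M.m (tstar M g l u₂ x) * (l * x) ≤ M.m (tstar M g l u₁ x) * (l * x) := by
  have hβ := M.β_mem.1
  have hu2 : 0 < u₂ := lt_of_lt_of_le hu1 hle
  by_cases h2 : M.β * l * x > u₂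
  · have h1 : M.β * l * x > u₁ := lt_of_le_of_lt hle h2
    obtain ⟨hy2, ht2⟩ := tstar_ind_pos M hg0 hgmono hu2 h2
    obtain ⟨hy1, ht1⟩ := tstar_ind_pos M hg0 hgmono hu1 h1
    have hx : 0 < l * x := by nlinarith
    have hyy : l * x / u₂ ≤ l * x / u₁ := by
      apply div_le_div_of_nonneg_left hx.le hu1 hle
    have hg_le : g (l * x / u₂) ≤ g (l * x / u₁) :=
      hgmono.monotoneOn (mem_Ici.mpr hy2.le) (mem_Ici.mpr hy1.le) hyy
    have hm_le : M.m (g (l * x / u₂)) ≤ M.m (g (l * x / u₁)) :=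
      M.mono.monotoneOn (mem_Ici.mpr ht2.le) (mem_Ici.mpr ht1.le) hg_le
    unfold tstar
    rw [if_pos h2, if_pos h1]
    exact mul_le_mul_of_nonneg_right hm_le hx.le
  · have : M.m (tstar M g l u₂ x) * (l * x) = 0 := by
      unfold tstar; rw [if_neg h2]; simp [M.m_zero]
    rw [this]
    exact tstar_val_nonneg M hg0 hgmono hu1 x

lemma tstar_continuous (hg0 : g (1 / M.β) = 0) (hgcont : ContinuousOn g (Ici (1 / M.β)))
    {u : ℝ} (hu : 0 < u) : Continuous (fun x => tstar M g l u x) := by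
  have heq : (fun x => tstar M g l u x) = fun x => g (max (l * x / u) (1 / M.β)) := by
    funext x; exact tstar_eq M hg0 hu x
  rw [heq]
  apply hgcont.comp_continuous
  · exact (((continuous_const.mul continuous_id).div_const u).max continuous_const)
  · intro x; exact mem_Ici.mpr (le_max_right _ _)

lemma tstar_val_integrable (hg0 : g (1 / M.β) = 0) (hgmono : StrictMonoOn g (Ici (1 / M.β)))
    (hgcont : ContinuousOn g (Ici (1 / M.β))) (hl : l ∈ Ioc (0:ℝ) 1)
    {u : ℝ} (hu : 0 < u) (ν : Measure ℝ) [IsProbabilityMeasure ν]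
    (hν : ν (Icc (0:ℝ) 1)ᶜ = 0) :
    Integrable (fun x => M.m (tstar M g l u x) * (l * x)) ν := by
  have hmmeas : Measurable (fun t => M.m (max t 0)) := by
    apply Monotone.measurable
    intro a b hab
    exact M.mono.monotoneOn (mem_Ici.mpr (le_max_right _ _)) (mem_Ici.mpr (le_max_right _ _))
      (max_le_max hab le_rfl)
  have htc : Continuous (fun x => tstar M g l u x) := tstar_continuous M hg0 hgcont hu
  have hfeq : (fun x => M.m (tstar M g l u x) * (l * x)) =
      (fun x => M.m (max (tstar M g l u x) 0) * (l * x)) := by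
    funext x
    rw [max_eq_left (tstar_nonneg M hg0 hgmono hu x)]
  have hmeas : Measurable (fun x => M.m (tstar M g l u x) * (l * x)) := by
    rw [hfeq]
    exact (hmmeas.comp htc.measurable).mul (measurable_const.mul measurable_id)
  apply Integrable.mono' (integrable_const (1:ℝ)) hmeas.aestronglyMeasurable
  have hae : ∀ᵐ x ∂ν, x ∈ Icc (0:ℝ) 1 := by
    rw [ae_iff]
    exact hν
  filter_upwards [hae] with x hx
  have h0 : 0 ≤ M.m (tstar M g l u x) * (l * x) := tstar_val_nonneg M hg0 hgmono hu x
  rw [Real.norm_eq_abs, abs_of_nonneg h0]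
  have ht0 : 0 ≤ tstar M g l u x := tstar_nonneg M hg0 hgmono hu x
  have hm1 : M.m (tstar M g l u x) ≤ 1 :=
    le_trans (M.m_le _ ht0) (min_le_left _ _)
  have hm0 : 0 ≤ M.m (tstar M g l u x) := by
    have := M.mono.monotoneOn (self_mem_Ici (a := (0:ℝ))) (mem_Ici.mpr ht0) ht0
    rwa [M.m_zero] at this
  have hlx : l * x ≤ 1 := by nlinarith [hl.1, hl.2, hx.1, hx.2]
  have hlx0 : 0 ≤ l * x := mul_nonneg hl.1.le hx.1
  nlinarith

end Aux

/-- With `λ ≡ ℓ ∈ (0,1]`, a segmentation `H ∈ MPC(F)` is constrained-efficient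
(maximizes `k ∫ m(τ*_H(x)) x dH(x)` over `MPC(F)`) iff `H` maximizes
`Ĥ ↦ k ∫ τ*_H(x) dĤ(x)` over `MPC(F)`. -/
theorem stmt9 (M : MeetingFunction) (g : ℝ → ℝ)
    (hg0 : g (1 / M.β) = 0)
    (hgmono : StrictMonoOn g (Ici (1 / M.β)))
    (hgcont : ContinuousOn g (Ici (1 / M.β)))
    (hgtop : Tendsto g atTop atTop)
    (hginv : ∀ t > (0:ℝ), g (t / M.m t) = t)
    (k : ℝ) (hk : 0 < k) (l : ℝ) (hl : l ∈ Ioc (0:ℝ) 1)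
    (μF : Measure ℝ) [IsProbabilityMeasure μF]
    (hsupp : μF (Icc (0:ℝ) 1)ᶜ = 0) (hac : μF ≪ volume)
    (ustar : Measure ℝ → ℝ)
    (hustar : ∀ H ∈ MPC μF, ustar H ∈ Ioo 0 (M.β * l) ∧
      ustar H = k * ∫ x, M.m (tstar M g l (ustar H) x) * (l * x) ∂H ∧
      ∀ u ∈ Ioo 0 (M.β * l),
        u = k * ∫ x, M.m (tstar M g l u x) * (l * x) ∂H → u = ustar H)
    (H : Measure ℝ) (hH : H ∈ MPC μF) :
    (∀ H' ∈ MPC μF,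
        k * ∫ x, M.m (tstar M g l (ustar H') x) * x ∂H' ≤
        k * ∫ x, M.m (tstar M g l (ustar H) x) * x ∂H) ↔
    (∀ Hhat ∈ MPC μF,
        k * ∫ x, tstar M g l (ustar H) x ∂Hhat ≤
        k * ∫ x, tstar M g l (ustar H) x ∂H) := by
  obtain ⟨huH, hfixH, -⟩ := hustar H hH
  have hl0 : (0:ℝ) < l := hl.1
  have hu0 : 0 < ustar H := huH.1
  -- rewrite A : relate ∫ m·x to ∫ m·(l x)
  have hA : ∀ (ν : Measure ℝ) (v : ℝ),
      ∫ x, M.m (tstar M g l v x) * x ∂ν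
        = (∫ x, M.m (tstar M g l v x) * (l * x) ∂ν) * l⁻¹ := by
    intro ν v
    rw [← integral_mul_const]
    congr 1; funext x; field_simp
  -- rewrite B : relate ∫ tstar to ∫ m·(l x)
  have hB : ∀ (ν : Measure ℝ),
      ∫ x, tstar M g l (ustar H) x ∂ν
        = (∫ x, M.m (tstar M g l (ustar H) x) * (l * x) ∂ν) * (ustar H)⁻¹ := by
    intro ν
    rw [← integral_mul_const]
    congr 1; funext x
    rw [tstar_identity M hg0 hgmono hginv hu0 x, mul_assoc,
      mul_inv_cancel₀ hu0.ne', mul_one]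
  -- objective value of any H' equals ustar H' / l
  have hobj : ∀ H' ∈ MPC μF,
      k * ∫ x, M.m (tstar M g l (ustar H') x) * x ∂H' = ustar H' / l := by
    intro H' hH'
    obtain ⟨hu', hfix', -⟩ := hustar H' hH'
    rw [hA H' (ustar H'), ← mul_assoc, ← hfix', div_eq_mul_inv]
  -- monotonicity of the fixed-point map in u
  have hΦmono : ∀ ν ∈ MPC μF, ∀ v₁ v₂ : ℝ, 0 < v₁ → v₁ ≤ v₂ →
      ∫ x, M.m (tstar M g l v₂ x) * (l * x) ∂ν
        ≤ ∫ x, M.m (tstar M g l v₁ x) * (l * x) ∂ν := by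
    intro ν hν v₁ v₂ h1 h12
    haveI := hν.1
    exact integral_mono
      (tstar_val_integrable M hg0 hgmono hgcont hl (lt_of_lt_of_le h1 h12) ν hν.2.1)
      (tstar_val_integrable M hg0 hgmono hgcont hl h1 ν hν.2.1)
      (fun x => tstar_val_mono M hg0 hgmono h1 h12 x)
  have hΦHu : k * ∫ x, M.m (tstar M g l (ustar H) x) * (l * x) ∂H = ustar H :=
    hfixH.symm
  constructor
  · intro hL Hhat hHhat
    rw [hB Hhat, hB H, ← mul_assoc, ← mul_assoc, hΦHu]
    apply mul_le_mul_of_nonneg_right _ (inv_nonneg.mpr hu0.le)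
    obtain ⟨huh, hfixh, -⟩ := hustar Hhat hHhat
    have h1 : ustar Hhat ≤ ustar H := by
      have h := hL Hhat hHhat
      rw [hobj Hhat hHhat, hobj H hH] at h
      have h2 := mul_le_mul_of_nonneg_right h hl0.le
      rwa [div_mul_cancel₀ _ hl0.ne', div_mul_cancel₀ _ hl0.ne'] at h2
    calc k * ∫ x, M.m (tstar M g l (ustar H) x) * (l * x) ∂Hhat
        ≤ k * ∫ x, M.m (tstar M g l (ustar Hhat) x) * (l * x) ∂Hhat :=
          mul_le_mul_of_nonneg_left (hΦmono Hhat hHhat _ _ huh.1 h1) hk.le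
      _ = ustar Hhat := hfixh.symm
      _ ≤ ustar H := h1
  · intro hR H' hH'
    rw [hobj H' hH', hobj H hH]
    obtain ⟨hu', hfix', -⟩ := hustar H' hH'
    have hkey : ustar H' ≤ ustar H := by
      by_contra hcon
      push_neg at hcon
      have h2 : k * ∫ x, M.m (tstar M g l (ustar H) x) * (l * x) ∂H' ≤ ustar H := by
        have h := hR H' hH'
        rw [hB H', hB H, ← mul_assoc, ← mul_assoc, hΦHu] at h
        have h3 := mul_le_mul_of_nonneg_right h hu0.le
        rwa [mul_assoc, inv_mul_cancel₀ hu0.ne', mul_one, mul_assoc,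
          inv_mul_cancel₀ hu0.ne', mul_one] at h3
      have h3 : k * ∫ x, M.m (tstar M g l (ustar H') x) * (l * x) ∂H'
          ≤ k * ∫ x, M.m (tstar M g l (ustar H) x) * (l * x) ∂H' :=
        mul_le_mul_of_nonneg_left (hΦmono H' hH' _ _ hu0 hcon.le) hk.le
      rw [← hfix'] at h3
      linarith
    gcongr
end
end
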